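/- On any bounded graph class (graphs with at most N nodes), every node classifier computable by an L-layer R²-GNN is equivalent to a FOC2 formula of quantifier depth at most L and parse-tree size at most 2^{2 f(L)}, where f is the tower function defined by f(0) = O(2^{2^{2(m1+m2)}}) and f(k+1) = 2^{2^{2(N+1) f(k)}}. -/

import Mathlib

inductive Var : Type
  | x | y
deriving DecidableEq

structure RGraph (P1 P2 : Type) where
  V : Type
  [fintV : Fintype V]
  [decV : DecidableEq V]
  unary : P1 → V → Prop
  rel : P2 → V → V → Prop
  [decU : ∀ p, DecidablePred (unary p)]
  [decR : ∀ r, DecidableRel (rel r)]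

attribute [instance] RGraph.fintV RGraph.decV RGraph.decU RGraph.decR

inductive FOC2 (P1 P2 : Type) : Type
  | tru : FOC2 P1 P2
  | atom : P1 → Var → FOC2 P1 P2
  | rel : P2 → Var → Var → FOC2 P1 P2
  | and : FOC2 P1 P2 → FOC2 P1 P2 → FOC2 P1 P2
  | or : FOC2 P1 P2 → FOC2 P1 P2 → FOC2 P1 P2
  | not : FOC2 P1 P2 → FOC2 P1 P2
  | exge : ℕ → Var → FOC2 P1 P2 → FOC2 P1 P2

variable {P1 P2 : Type}

/-- Satisfaction of a `FOC2` formula in a multi-relational graph under an assignment. -/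
def RGraph.sat (G : RGraph P1 P2) : (Var → G.V) → FOC2 P1 P2 → Prop
  | _, .tru => True
  | σ, .atom p v => G.unary p (σ v)
  | σ, .rel r u w => G.rel r (σ u) (σ w)
  | σ, .and φ ψ => G.sat σ φ ∧ G.sat σ ψ
  | σ, .or φ ψ => G.sat σ φ ∨ G.sat σ ψ
  | σ, .not φ => ¬ G.sat σ φ
  | σ, .exge n v φ => ∃ S : Finset G.V, S.card = n ∧ ∀ a ∈ S, G.sat (Function.update σ v a) φ

/-- Quantifier depth. -/
def FOC2.depth : FOC2 P1 P2 → ℕ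
  | .tru => 0
  | .atom _ _ => 0
  | .rel _ _ _ => 0
  | .and φ ψ => max φ.depth ψ.depth
  | .or φ ψ => max φ.depth ψ.depth
  | .not φ => φ.depth
  | .exge _ _ φ => φ.depth + 1

/-- All counting thresholds are at most `m`. -/
def FOC2.thresholdsLe (m : ℕ) : FOC2 P1 P2 → Prop
  | .tru => True
  | .atom _ _ => True
  | .rel _ _ _ => True
  | .and φ ψ => φ.thresholdsLe m ∧ ψ.thresholdsLe m
  | .or φ ψ => φ.thresholdsLe m ∧ ψ.thresholdsLe m
  | .not φ => φ.thresholdsLe m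
  | .exge n _ φ => n ≤ m ∧ φ.thresholdsLe m

/-- Free variables. -/
def FOC2.freeVars : FOC2 P1 P2 → Finset Var
  | .tru => ∅
  | .atom _ v => {v}
  | .rel _ u w => {u, w}
  | .and φ ψ => φ.freeVars ∪ ψ.freeVars
  | .or φ ψ => φ.freeVars ∪ ψ.freeVars
  | .not φ => φ.freeVars
  | .exge _ v φ => φ.freeVars \ {v}

/-- Parse-tree size. -/
def FOC2.size : FOC2 P1 P2 → ℕ
  | .tru => 1
  | .atom _ _ => 1
  | .rel _ _ _ => 1
  | .and φ ψ => φ.size + ψ.size + 1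
  | .or φ ψ => φ.size + ψ.size + 1
  | .not φ => φ.size + 1
  | .exge _ _ φ => φ.size + 1

/-- A generic R²-GNN run: per-layer combination functions taking the node's previous
feature, for each relation the multiset of neighbours' features, and the global multiset. -/
def runGNN (G : RGraph P1 P2) {X : Type} (h0 : G.V → X)
    (C : ℕ → X → (P2 → Multiset X) → Multiset X → X) : ℕ → G.V → X
  | 0, v => h0 v
  | i + 1, v =>
    C i (runGNN G h0 C i v)
      (fun r => (Finset.univ.filter (fun u => G.rel r v u)).val.map (runGNN G h0 C i))
      (Finset.univ.val.map (runGNN G h0 C i))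

/-- The tower bound `f`: `f 0 = 1000·2^(2^(2(m1+m2)))`,
`f (k+1) = 2^(2^(2(N+1)·f k))`. -/
def fbound (m1 m2 N : ℕ) : ℕ → ℕ
  | 0 => 1000 * 2 ^ 2 ^ (2 * (m1 + m2))
  | k + 1 => 2 ^ 2 ^ (2 * (N + 1) * fbound m1 m2 N k)


/-!
Color the nodes layer by layer, as in color refinement with global readout: the color of a
node at layer `i + 1` is its color at layer `i` together with, for every relation and for the
whole graph, the number of nodes of each layer-`i` color among its neighbours (resp. in the
graph). By induction on `i`, the layer-`i` feature of an R²-GNN is a function of the layer-`i`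
color, and each layer-`i` color class is defined by an FOC2 formula of depth `i`: the counts are
expressed by counting quantifiers over `y` applied to the layer-`i` formulas with `x` and `y`
swapped. The classifier accepts a node iff its color avoids every rejected color, a conjunction
of negated color formulas. Counting colors and formula sizes layer by layer gives the tower
`fbound`.
-/

open Finset

lemma Fin.clamp_eq_iff {n m : ℕ} (h : n ≤ m) (j : Fin (m + 1)) : Fin.clamp n m = j ↔ n = j := by
  rw [Fin.ext_iff, Fin.coe_clamp, min_eq_left h]

lemma Multiset.map_comp_eq_sum_nsmul {V T X : Type} [Fintype T] [DecidableEq T] (S : Finset V)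
    (c : V → T) (F : T → X) :
    S.val.map (fun v => F (c v)) = ∑ t, #{v ∈ S | c v = t} • {F t} := by
  have hsum : S.val.map c = ∑ t, (S.val.map c).count t • {t} := by
    rw [← sum_subset (subset_univ _), Multiset.toFinset_sum_count_nsmul_eq]
    intro t _ ht
    rw [Multiset.count_eq_zero.2 (mt Multiset.mem_toFinset.2 ht), zero_smul]
  have hcount : ∀ t, (S.val.map c).count t = #{v ∈ S | c v = t} := by
    intro t
    rw [Multiset.count_map, card_def, filter_val]
    simp only [eq_comm]
  change S.val.map (F ∘ c) = _
  rw [← Multiset.map_map, hsum, ← Multiset.coe_mapAddMonoidHom, map_sum]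
  simp [hcount, Multiset.map_nsmul]

def Var.swap : Var → Var
  | .x => .y
  | .y => .x

namespace FOC2

def swapXY : FOC2 P1 P2 → FOC2 P1 P2
  | .tru => .tru
  | .atom p v => .atom p v.swap
  | .rel r u w => .rel r u.swap w.swap
  | .and φ ψ => .and φ.swapXY ψ.swapXY
  | .or φ ψ => .or φ.swapXY ψ.swapXY
  | .not φ => .not φ.swapXY
  | .exge n v φ => .exge n v.swap φ.swapXY

@[simp]
lemma depth_swapXY (φ : FOC2 P1 P2) : φ.swapXY.depth = φ.depth := by
  induction φ <;> simp [swapXY, depth, *]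

@[simp]
lemma size_swapXY (φ : FOC2 P1 P2) : φ.swapXY.size = φ.size := by
  induction φ <;> simp [swapXY, size, *]

def bigAnd (l : List (FOC2 P1 P2)) : FOC2 P1 P2 :=
  l.foldr .and .tru

lemma depth_bigAnd_le {d : ℕ} {l : List (FOC2 P1 P2)} (h : ∀ ψ ∈ l, ψ.depth ≤ d) :
    (bigAnd l).depth ≤ d := by
  induction l with
  | nil => simp [bigAnd, depth]
  | cons φ l ih => simp_all [bigAnd, depth]

lemma freeVars_bigAnd_subset {s : Finset Var} {l : List (FOC2 P1 P2)}
    (h : ∀ ψ ∈ l, ψ.freeVars ⊆ s) : (bigAnd l).freeVars ⊆ s := by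
  induction l with
  | nil => simp [bigAnd, freeVars]
  | cons φ l ih => simp_all [bigAnd, freeVars, union_subset_iff]

lemma size_bigAnd_le {b : ℕ} {l : List (FOC2 P1 P2)} (h : ∀ ψ ∈ l, ψ.size ≤ b) :
    (bigAnd l).size ≤ l.length * (b + 1) + 1 := by
  induction l with
  | nil => simp [bigAnd, size]
  | cons φ l ih =>
    simp only [List.mem_cons, forall_eq_or_imp] at h
    simp only [bigAnd, List.foldr_cons, size, List.length_cons] at ih ⊢
    nlinarith [ih h.2, h.1]

def eqCount (n : ℕ) (ψ : FOC2 P1 P2) : FOC2 P1 P2 :=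
  (exge n .y ψ).and (.not (exge (n + 1) .y ψ))

@[simp]
lemma depth_eqCount (n : ℕ) (ψ : FOC2 P1 P2) : (eqCount n ψ).depth = ψ.depth + 1 := by
  simp [eqCount, depth]

@[simp]
lemma size_eqCount (n : ℕ) (ψ : FOC2 P1 P2) : (eqCount n ψ).size = 2 * ψ.size + 4 := by
  simp [eqCount, size]; ring

lemma freeVars_eqCount_subset (n : ℕ) (ψ : FOC2 P1 P2) :
    (eqCount n ψ).freeVars ⊆ {Var.x} := by
  intro v
  cases v <;> simp [eqCount, freeVars]

/-- `none` encodes the global readout, as the relation that holds between all pairs of nodes. -/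
def edge : Option P2 → FOC2 P1 P2
  | none => .tru
  | some r => .rel r .x .y

@[simp]
lemma depth_edge (o : Option P2) : (edge o : FOC2 P1 P2).depth = 0 := by
  cases o <;> rfl

@[simp]
lemma size_edge (o : Option P2) : (edge o : FOC2 P1 P2).size = 1 := by
  cases o <;> rfl

end FOC2

namespace RGraph

variable (G : RGraph P1 P2)

def neighborFinset : Option P2 → G.V → Finset G.V
  | none, _ => univ
  | some r, v => {u | G.rel r v u}

lemma sat_edge (σ : Var → G.V) (o : Option P2) :
    G.sat σ (FOC2.edge o) ↔ σ .y ∈ G.neighborFinset o (σ .x) := by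
  cases o <;> simp [FOC2.edge, neighborFinset, sat]

lemma sat_swapXY (φ : FOC2 P1 P2) (σ : Var → G.V) :
    G.sat σ φ.swapXY ↔ G.sat (σ ∘ Var.swap) φ := by
  induction φ generalizing σ with
  | exge n v φ ih =>
    have hupd : ∀ a, Function.update σ v.swap a ∘ Var.swap =
        Function.update (σ ∘ Var.swap) v a := by
      intro a; funext w; cases v <;> cases w <;> rfl
    simp only [sat, FOC2.swapXY, ih, hupd]
  | _ => simp_all [sat, FOC2.swapXY]

lemma sat_bigAnd (σ : Var → G.V) (l : List (FOC2 P1 P2)) :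
    G.sat σ (FOC2.bigAnd l) ↔ ∀ ψ ∈ l, G.sat σ ψ := by
  induction l with
  | nil => simp [FOC2.bigAnd, sat]
  | cons φ l ih => simp [FOC2.bigAnd, sat, ← ih]

lemma sat_exge_iff {σ : Var → G.V} {v : Var} {ψ : FOC2 P1 P2} {S : Finset G.V}
    (hS : ∀ a, G.sat (Function.update σ v a) ψ ↔ a ∈ S) (n : ℕ) :
    G.sat σ (.exge n v ψ) ↔ n ≤ #S := by
  simp only [sat, hS]
  constructor
  · rintro ⟨T, rfl, hT⟩
    exact card_le_card hT
  · intro hn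
    obtain ⟨T, hTS, rfl⟩ := exists_subset_card_eq hn
    exact ⟨T, rfl, hTS⟩

lemma sat_eqCount_iff {σ : Var → G.V} {ψ : FOC2 P1 P2} {S : Finset G.V}
    (hS : ∀ a, G.sat (Function.update σ .y a) ψ ↔ a ∈ S) (n : ℕ) :
    G.sat σ (FOC2.eqCount n ψ) ↔ #S = n := by
  simp only [FOC2.eqCount]
  rw [sat, sat, G.sat_exge_iff hS, G.sat_exge_iff hS]
  omega

end RGraph

/-- A coloring with at most `K` colors whose color classes, on graphs with at most `N` nodes, are
defined by formulas of depth at most `d` and size at most `S`. -/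
structure DefinableColoring (P1 P2 : Type) (N d K S : ℕ) where
  Color : Type
  [instFintype : Fintype Color]
  [instDecidableEq : DecidableEq Color]
  color : ∀ G : RGraph P1 P2, G.V → Color
  formula : Color → FOC2 P1 P2
  card_le : Fintype.card Color ≤ K
  depth_le : ∀ c, (formula c).depth ≤ d
  size_le : ∀ c, (formula c).size ≤ S
  freeVars_subset : ∀ c, (formula c).freeVars ⊆ {Var.x}
  sat_formula_iff : ∀ G : RGraph P1 P2, Fintype.card G.V ≤ N →
    ∀ σ c, G.sat σ (formula c) ↔ color G (σ .x) = c

attribute [instance] DefinableColoring.instFintype DefinableColoring.instDecidableEq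

namespace DefinableColoring

variable {N d K S : ℕ}

noncomputable def atomic [Fintype P1] [DecidableEq P1] :
    DefinableColoring P1 P2 N 0 (2 ^ Fintype.card P1) (3 * Fintype.card P1 + 1) where
  Color := P1 → Bool
  color G v p := G.unary p v
  formula c := FOC2.bigAnd (univ.toList.map fun p =>
    if c p then .atom p .x else .not (.atom p .x))
  card_le := by simp
  depth_le c := FOC2.depth_bigAnd_le (by simp [apply_ite FOC2.depth, FOC2.depth])
  size_le c := by
    refine (FOC2.size_bigAnd_le (b := 2) ?_).trans (by simp [mul_comm])
    simp only [List.forall_mem_map]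
    intro p _
    split <;> simp [FOC2.size]
  freeVars_subset c :=
    FOC2.freeVars_bigAnd_subset (by simp [apply_ite FOC2.freeVars, FOC2.freeVars])
  sat_formula_iff G _ σ c := by
    simp only [RGraph.sat_bigAnd, List.forall_mem_map, mem_toList, mem_univ, true_implies,
      funext_iff]
    refine forall_congr' fun p => ?_
    cases c p <;> simp [RGraph.sat]

def mono (Θ : DefinableColoring P1 P2 N d K S) {K' S' : ℕ} (hK : K ≤ K') (hS : S ≤ S') :
    DefinableColoring P1 P2 N d K' S' :=
  { Θ with
    card_le := Θ.card_le.trans hK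
    size_le := fun c => (Θ.size_le c).trans hS }

lemma card_neighborFinset_filter_le (Θ : DefinableColoring P1 P2 N d K S) {G : RGraph P1 P2}
    (hG : Fintype.card G.V ≤ N) (o : Option P2) (v : G.V) (c : Θ.Color) :
    #{u ∈ G.neighborFinset o v | Θ.color G u = c} ≤ N :=
  (card_le_univ _).trans hG

/-- The counts are clamped at `N` to keep the colors finite; on graphs with at most `N` nodes the
clamp does nothing. -/
noncomputable def refine [Fintype P2] [DecidableEq P2] (Θ : DefinableColoring P1 P2 N d K S) :
    DefinableColoring P1 P2 N (d + 1) (K * (N + 1) ^ ((Fintype.card P2 + 1) * K))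
      (S + (Fintype.card P2 + 1) * K * (2 * S + 9) + 2) where
  Color := Θ.Color × (Option P2 × Θ.Color → Fin (N + 1))
  color G v :=
    (Θ.color G v, fun q => Fin.clamp #{u ∈ G.neighborFinset q.1 v | Θ.color G u = q.2} N)
  formula w := (Θ.formula w.1).and (FOC2.bigAnd (univ.toList.map fun q =>
    FOC2.eqCount (w.2 q) ((FOC2.edge q.1).and (Θ.formula q.2).swapXY)))
  card_le := by
    simp only [Fintype.card_prod, Fintype.card_fun, Fintype.card_option, Fintype.card_fin]
    exact Nat.mul_le_mul Θ.card_le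
      (Nat.pow_le_pow_right N.succ_pos (Nat.mul_le_mul_left _ Θ.card_le))
  depth_le w := by
    simp only [FOC2.depth, max_le_iff]
    refine ⟨(Θ.depth_le _).trans d.le_succ,
      FOC2.depth_bigAnd_le (List.forall_mem_map.2 fun q _ => ?_)⟩
    simpa [FOC2.depth] using Θ.depth_le q.2
  size_le w := by
    have hlen : (univ.toList.map fun q : Option P2 × Θ.Color =>
        FOC2.eqCount (P1 := P1) (w.2 q) ((FOC2.edge q.1).and (Θ.formula q.2).swapXY)).length
        ≤ (Fintype.card P2 + 1) * K := by
      simpa using Θ.card_le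
    have hconj := FOC2.size_bigAnd_le (b := 2 * S + 8) (l := univ.toList.map fun q =>
        FOC2.eqCount (P1 := P1) (w.2 q) ((FOC2.edge q.1).and (Θ.formula q.2).swapXY))
      (List.forall_mem_map.2 fun q _ => by have := Θ.size_le q.2; simp [FOC2.size]; omega)
    have := Θ.size_le w.1
    simp only [FOC2.size]
    nlinarith [Nat.mul_le_mul_right (2 * S + 8 + 1) hlen]
  freeVars_subset w := by
    simp only [FOC2.freeVars, union_subset_iff]
    exact ⟨Θ.freeVars_subset _, FOC2.freeVars_bigAnd_subset
      (List.forall_mem_map.2 fun _ _ => FOC2.freeVars_eqCount_subset _ _)⟩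
  sat_formula_iff G hG σ w := by
    have hcount : ∀ q : Option P2 × Θ.Color,
        G.sat σ (FOC2.eqCount (w.2 q) ((FOC2.edge q.1).and (Θ.formula q.2).swapXY)) ↔
          #{u ∈ G.neighborFinset q.1 (σ .x) | Θ.color G u = q.2} = w.2 q := fun q =>
      G.sat_eqCount_iff (fun a => by
        simp [RGraph.sat, RGraph.sat_edge, RGraph.sat_swapXY, Θ.sat_formula_iff G hG,
          Var.swap]) _
    simp only [RGraph.sat, RGraph.sat_bigAnd, List.forall_mem_map, mem_toList, mem_univ,
      true_implies, hcount, Θ.sat_formula_iff G hG, Prod.ext_iff, funext_iff,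
      Fin.clamp_eq_iff (Θ.card_neighborFinset_filter_le hG _ _ _)]

lemma exists_formula_iff (Θ : DefinableColoring P1 P2 N d K S) (P : Θ.Color → Prop) :
    ∃ φ : FOC2 P1 P2, φ.freeVars ⊆ {Var.x} ∧ φ.depth ≤ d ∧ φ.size ≤ K * (S + 2) + 1 ∧
      ∀ G : RGraph P1 P2, Fintype.card G.V ≤ N → ∀ v : G.V,
        (P (Θ.color G v) ↔ G.sat (fun _ => v) φ) := by
  classical
  -- A node has exactly one color, so it satisfies `P` iff it avoids every color outside `P`.
  refine ⟨FOC2.bigAnd (({c | ¬ P c} : Finset Θ.Color).toList.map fun c => .not (Θ.formula c)),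
    FOC2.freeVars_bigAnd_subset (List.forall_mem_map.2 fun c _ => Θ.freeVars_subset c),
    FOC2.depth_bigAnd_le (List.forall_mem_map.2 fun c _ => Θ.depth_le c), ?_, ?_⟩
  · refine (FOC2.size_bigAnd_le (b := S + 1)
      (List.forall_mem_map.2 fun c _ => by simpa [FOC2.size] using Θ.size_le c)).trans ?_
    simp only [List.length_map, length_toList]
    gcongr
    exact (card_le_univ _).trans Θ.card_le
  · intro G hG v
    simp only [RGraph.sat_bigAnd, List.forall_mem_map, mem_toList, mem_filter, mem_univ,
      true_and, RGraph.sat, Θ.sat_formula_iff G hG]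
    exact ⟨fun hP c hc hcv => hc (hcv ▸ hP), fun h => by_contra fun hP => h _ hP rfl⟩

def Determines (Θ : DefinableColoring P1 P2 N d K S) {X : Type}
    (h : ∀ G : RGraph P1 P2, G.V → X) : Prop :=
  ∃ F : Θ.Color → X, ∀ G : RGraph P1 P2, Fintype.card G.V ≤ N → ∀ v, h G v = F (Θ.color G v)

lemma Determines.refine [Fintype P2] [DecidableEq P2] {Θ : DefinableColoring P1 P2 N d K S}
    {X : Type} {h₀ : ∀ G : RGraph P1 P2, G.V → X}
    {C : ℕ → X → (P2 → Multiset X) → Multiset X → X} {i : ℕ}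
    (hΘ : Θ.Determines fun G => runGNN G (h₀ G) C i) :
    Θ.refine.Determines fun G => runGNN G (h₀ G) C (i + 1) := by
  obtain ⟨F, hF⟩ := hΘ
  refine ⟨fun w => C i (F w.1) (fun r => ∑ c, (w.2 (some r, c) : ℕ) • {F c})
    (∑ c, (w.2 (none, c) : ℕ) • {F c}), fun G hG v => ?_⟩
  have hmset : ∀ o, (G.neighborFinset o v).val.map (runGNN G (h₀ G) C i) =
      ∑ c, (Fin.clamp #{u ∈ G.neighborFinset o v | Θ.color G u = c} N : ℕ) • {F c} := by
    intro o
    simp only [Fin.coe_clamp, min_eq_left (Θ.card_neighborFinset_filter_le hG _ _ _)]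
    rw [Multiset.map_congr rfl fun u _ => hF G hG u, Multiset.map_comp_eq_sum_nsmul]
  exact congr (congrArg₂ (C i) (hF G hG v) (funext fun r => hmset (some r))) (hmset none)

end DefinableColoring
section fbound

variable (m1 m2 N : ℕ)

lemma fbound_zero_ge : 1000 * 2 ^ (m1 + m2) ≤ fbound m1 m2 N 0 := by
  have h : m1 + m2 ≤ 2 ^ (2 * (m1 + m2)) := by
    have := (2 * (m1 + m2)).lt_two_pow_self
    omega
  exact Nat.mul_le_mul_left _ (Nat.pow_le_pow_right two_pos h)

lemma fbound_monotone : Monotone (fbound m1 m2 N) := by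
  refine monotone_nat_of_le_succ fun i => ?_
  set A := fbound m1 m2 N i
  calc A ≤ 2 * (N + 1) * A := Nat.le_mul_of_pos_left A (by positivity)
    _ ≤ 2 ^ 2 ^ (2 * (N + 1) * A) :=
      Nat.lt_two_pow_self.le.trans (Nat.pow_le_pow_right two_pos Nat.lt_two_pow_self.le)

lemma add_nine_le_fbound (i : ℕ) : m2 + 9 ≤ fbound m1 m2 N i := by
  have := (m1 + m2).lt_two_pow_self
  have := fbound_zero_ge m1 m2 N
  have := fbound_monotone m1 m2 N (Nat.zero_le i)
  omega

lemma card_le_fbound_succ (i : ℕ) :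
    fbound m1 m2 N i * (N + 1) ^ ((m2 + 1) * fbound m1 m2 N i) ≤ fbound m1 m2 N (i + 1) := by
  set A := fbound m1 m2 N i
  have hm : m2 + 1 ≤ A := by have := add_nine_le_fbound m1 m2 N i; omega
  have hexp : A + N * ((m2 + 1) * A) ≤ 2 ^ (2 * (N + 1) * A) :=
    calc A + N * ((m2 + 1) * A) ≤ A * A + N * (A * A) :=
          add_le_add (Nat.le_mul_self A) (Nat.mul_le_mul_left N (Nat.mul_le_mul_right A hm))
      _ = (N + 1) * A * A := by ring
      _ ≤ 2 ^ ((N + 1) * A) * 2 ^ ((N + 1) * A) :=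
        Nat.mul_le_mul Nat.lt_two_pow_self.le
          (Nat.lt_two_pow_self.le.trans (Nat.pow_le_pow_right two_pos (by nlinarith)))
      _ = 2 ^ (2 * (N + 1) * A) := by rw [← pow_add]; ring_nf
  calc A * (N + 1) ^ ((m2 + 1) * A) ≤ 2 ^ A * (2 ^ N) ^ ((m2 + 1) * A) :=
        Nat.mul_le_mul Nat.lt_two_pow_self.le (Nat.pow_le_pow_left Nat.lt_two_pow_self _)
    _ = 2 ^ (A + N * ((m2 + 1) * A)) := by rw [← pow_mul, ← pow_add]
    _ ≤ 2 ^ 2 ^ (2 * (N + 1) * A) := Nat.pow_le_pow_right two_pos hexp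

lemma size_le_fbound_succ (i : ℕ) :
    fbound m1 m2 N i + (m2 + 1) * fbound m1 m2 N i * (2 * fbound m1 m2 N i + 9) + 2 ≤
      fbound m1 m2 N (i + 1) := by
  have hA := add_nine_le_fbound m1 m2 N i
  set A := fbound m1 m2 N i
  have h4 : 4 ≤ 2 ^ A := (Nat.pow_le_pow_right two_pos (by omega : 2 ≤ A)).trans' (by norm_num)
  have hA2 : A ≤ 2 ^ A := Nat.lt_two_pow_self.le
  calc A + (m2 + 1) * A * (2 * A + 9) + 2 ≤ 4 * A * A * A := by
        nlinarith [Nat.mul_le_mul_right (A * (2 * A + 9)) (by omega : m2 + 1 ≤ A)]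
    _ ≤ 2 ^ A * 2 ^ A * 2 ^ A * 2 ^ A := by gcongr
    _ = 2 ^ (2 * A + 2 * A) := by rw [← pow_add, ← pow_add, ← pow_add]; ring_nf
    _ ≤ 2 ^ 2 ^ (2 * (N + 1) * A) := by
      refine Nat.pow_le_pow_right two_pos ?_
      calc 2 * A + 2 * A = 4 * A := by ring
        _ ≤ 2 ^ A * 2 ^ A := Nat.mul_le_mul h4 hA2
        _ = 2 ^ (2 * A) := by rw [← pow_add]; ring_nf
        _ ≤ 2 ^ (2 * (N + 1) * A) := Nat.pow_le_pow_right two_pos (by nlinarith)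

end fbound

open DefinableColoring in
noncomputable def refinementColoring (P1 P2 : Type) [Fintype P1] [DecidableEq P1] [Fintype P2]
    [DecidableEq P2] (N : ℕ) :
    ∀ i, DefinableColoring P1 P2 N i (fbound (Fintype.card P1) (Fintype.card P2) N i)
      (fbound (Fintype.card P1) (Fintype.card P2) N i)
  | 0 =>
    have h := fbound_zero_ge (Fintype.card P1) (Fintype.card P2) N
    have hpow :=
      Nat.pow_le_pow_right two_pos (Nat.le_add_right (Fintype.card P1) (Fintype.card P2))
    have hlt := (Fintype.card P1).lt_two_pow_self
    atomic.mono (by omega) (by omega)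
  | i + 1 => (refinementColoring P1 P2 N i).refine.mono (card_le_fbound_succ _ _ _ i)
      (size_le_fbound_succ _ _ _ i)

lemma determines_runGNN [Fintype P1] [DecidableEq P1] [Fintype P2] [DecidableEq P2] (N : ℕ)
    {X : Type} (ι : (P1 → Bool) → X) (C : ℕ → X → (P2 → Multiset X) → Multiset X → X) (i : ℕ) :
    (refinementColoring P1 P2 N i).Determines
      fun G => runGNN G (fun u => ι fun p => decide (G.unary p u)) C i := by
  induction i with
  | zero => exact ⟨ι, fun _ _ _ => rfl⟩
  | succ i ih => exact ih.refine

/-- On graphs with at most `N` nodes, every node classifier computed by an `L`-layer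
R²-GNN is equivalent to a `FOC2` formula of quantifier depth at most `L` and parse-tree
size at most `2^(2·f L)`. -/
theorem stmt15 {P1 P2 : Type} [Fintype P1] [Fintype P2] (N L : ℕ)
    (X : Type) (ι : (P1 → Bool) → X)
    (C : ℕ → X → (P2 → Multiset X) → Multiset X → X) (out : X → Prop) :
    ∃ φ : FOC2 P1 P2, φ.freeVars ⊆ {Var.x} ∧ φ.depth ≤ L ∧
      φ.size ≤ 2 ^ (2 * fbound (Fintype.card P1) (Fintype.card P2) N L) ∧
      ∀ G : RGraph P1 P2, Fintype.card G.V ≤ N → ∀ v : G.V,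
        (out (runGNN G (fun u => ι (fun p => decide (G.unary p u))) C L v) ↔
          G.sat (fun _ => v) φ) := by
  classical
  set B := fbound (Fintype.card P1) (Fintype.card P2) N L
  obtain ⟨F, hF⟩ := determines_runGNN N ι C L
  obtain ⟨φ, hfree, hdepth, hsize, hsat⟩ :=
    (refinementColoring P1 P2 N L).exists_formula_iff fun c => out (F c)
  refine ⟨φ, hfree, hdepth, hsize.trans ?_, fun G hG v =>
    (iff_of_eq (congrArg out (hF G hG v))).trans (hsat G hG v)⟩
  calc B * (B + 2) + 1 = (B + 1) * (B + 1) := by ring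
    _ ≤ 2 ^ B * 2 ^ B := Nat.mul_le_mul Nat.lt_two_pow_self Nat.lt_two_pow_self
    _ = 2 ^ (2 * B) := by rw [← pow_add, two_mul]
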